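/- arXiv:0808.2943 — 3 statements merged into one kernel-verified Lean document; each statement's English description precedes it below -/
import Mathlib

section
/- Let l be odd, k satisfy 2^k < l < 2^{k+1}, and let a be an integer with 2^{k+1} − l < a ≤ 2^{k+1}. Set j₂ = −l + 2(1 + 2^{k+1} − a) and C_{l,m} = A_{l, l + 2(m−1)}. Then for all m ≥ 1, ν₂(C_{l, 2^{k+1}(m−1)+a}) = ν₂(m) + l + k + 2 + ν₂((j₂+l−1)!) + ν₂((l−j₂)!). -/
open Finset

/-- The 2-adic valuation of `A_{l,n}`, given by `ν₂(A_{l,n}) = l + Σ_{j=-l+1}^{l} ν₂(n+j)`. -/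
noncomputable def nuA (l : ℕ) (n : ℤ) : ℕ :=
  l + ∑ j ∈ Finset.Icc (-(l : ℤ) + 1) (l : ℤ), padicValInt 2 (n + j)

/-- For odd `l`, the 2-adic valuation of `C_{l,m} = A_{l, l + 2(m-1)}`. -/
noncomputable def nuC (l m : ℕ) : ℕ := nuA l ((l : ℤ) + 2 * ((m : ℤ) - 1))

open scoped Nat

/-!
Put `n = 2^(k+1)(m-1) + a`. The sum defining `ν₂(C_{l,n})` runs over the `2l` consecutive
integers starting at the odd number `2n - 1`; their even members are `2(n + i)` for `i < l`, so the
sum is `l + Σ_{i<l} ν₂(n + i)`. The window `n, …, n + l - 1` contains the multiple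
`T = 2^(k+1) m` at offset `b = 2^(k+1) - a`, and every other member lies at a distance
`0 < t < 2^(k+1)` from `T`, hence has valuation `ν₂(t)`. So the window contributes
`ν₂(b!) + ν₂(T) + ν₂(c!)` with `c = l - 1 - b`. Finally `j₂ + l - 1 = 2b + 1` and `l - j₂ = 2c`,
and `ν₂((2b+1)!) = ν₂((2b)!) = b + ν₂(b!)`.
-/

theorem padicValInt_add_of_pow_dvd {p K : ℕ} [Fact p.Prime] {x t : ℤ} (hx : (p : ℤ) ^ K ∣ x)
    (ht : t ≠ 0) (htK : t.natAbs < p ^ K) : padicValInt p (x + t) = padicValInt p t := by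
  set v := padicValInt p t
  have hvK : v < K := by
    have hle : p ^ v ≤ t.natAbs :=
      Nat.le_of_dvd (Int.natAbs_pos.mpr ht) (Int.natCast_dvd.mp (padicValInt_dvd t))
    exact (Nat.pow_lt_pow_iff_right (Fact.out : p.Prime).one_lt).mp (hle.trans_lt htK)
  have hx' : (p : ℤ) ^ (v + 1) ∣ x := (pow_dvd_pow _ hvK).trans hx
  have hxt : ¬ (p : ℤ) ^ (v + 1) ∣ x + t := by
    rw [dvd_add_right hx', padicValInt_dvd_iff]
    omega
  have hxt' : (p : ℤ) ^ v ∣ x + t := dvd_add ((pow_dvd_pow _ hvK.le).trans hx) (padicValInt_dvd t)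
  rw [padicValInt_dvd_iff] at hxt hxt'
  omega

theorem padicValNat_add_of_pow_dvd {p K x t : ℕ} [Fact p.Prime] (hx : p ^ K ∣ x)
    (ht : t ≠ 0) (htK : t < p ^ K) : padicValNat p (x + t) = padicValNat p t := by
  have := padicValInt_add_of_pow_dvd (x := x) (t := t) (by exact_mod_cast hx) (by omega) htK
  rwa [← Nat.cast_add, padicValInt.of_nat, padicValInt.of_nat] at this

theorem padicValNat_sub_of_pow_dvd {p K x t : ℕ} [Fact p.Prime] (hx : p ^ K ∣ x)
    (ht : t ≠ 0) (htK : t < p ^ K) (htx : t ≤ x) : padicValNat p (x - t) = padicValNat p t := by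
  have := padicValInt_add_of_pow_dvd (x := x) (t := -t) (by exact_mod_cast hx) (by omega)
    (by simpa using htK)
  rw [← Int.sub_eq_add_neg, ← Nat.cast_sub htx] at this
  simpa [padicValInt] using this

theorem padicValNat_factorial_eq_sum_range (p n : ℕ) [Fact p.Prime] :
    padicValNat p n ! = ∑ i ∈ range n, padicValNat p (i + 1) := by
  induction n with
  | zero => simp
  | succ n ih =>
    rw [sum_range_succ, ← ih, Nat.factorial_succ,
      padicValNat.mul n.succ_ne_zero n.factorial_ne_zero, add_comm]

theorem sum_range_padicValNat_add_of_pow_dvd {p K x n : ℕ} [Fact p.Prime] (hx : p ^ K ∣ x)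
    (hn : n < p ^ K) : ∑ i ∈ range n, padicValNat p (x + (i + 1)) = padicValNat p n ! := by
  rw [padicValNat_factorial_eq_sum_range]
  refine sum_congr rfl fun i hi => padicValNat_add_of_pow_dvd hx i.succ_ne_zero ?_
  rw [mem_range] at hi
  omega

theorem sum_range_padicValNat_sub_of_pow_dvd {p K x n : ℕ} [Fact p.Prime] (hx : p ^ K ∣ x)
    (hn : n < p ^ K) (hnx : n ≤ x) :
    ∑ i ∈ range n, padicValNat p (x - n + i) = padicValNat p n ! := by
  rw [padicValNat_factorial_eq_sum_range, ← sum_range_reflect]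
  refine sum_congr rfl fun i hi => ?_
  rw [mem_range] at hi
  rw [← padicValNat_sub_of_pow_dvd hx i.succ_ne_zero (by omega) (by omega)]
  congr 1
  omega

theorem sum_range_padicValNat_around_pow_dvd {p K T b c : ℕ} [Fact p.Prime] (hT : p ^ K ∣ T)
    (hb : b < p ^ K) (hc : c < p ^ K) (hbT : b ≤ T) :
    ∑ i ∈ range (b + 1 + c), padicValNat p (T - b + i)
      = padicValNat p b ! + padicValNat p T + padicValNat p c ! := by
  rw [sum_range_add, sum_range_succ, sum_range_padicValNat_sub_of_pow_dvd hT hb hbT,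
    Nat.sub_add_cancel hbT, ← sum_range_padicValNat_add_of_pow_dvd hT hc]
  refine congrArg _ (sum_congr rfl fun i _ => ?_)
  congr 1
  omega

theorem sum_range_two_mul_padicValNat_two (n s : ℕ) :
    ∑ i ∈ range (2 * s), padicValNat 2 (2 * n + 1 + i)
      = s + ∑ i ∈ range s, padicValNat 2 (n + 1 + i) := by
  induction s with
  | zero => simp
  | succ s ih =>
    rw [mul_add_one, sum_range_add, ih, sum_range_succ, sum_range_succ, sum_range_succ,
      padicValNat.eq_zero_of_not_dvd (by omega : ¬ 2 ∣ 2 * n + 1 + (2 * s + 0)),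
      show 2 * n + 1 + (2 * s + 1) = 2 * (n + 1 + s) by ring,
      padicValNat.mul two_ne_zero (by omega), padicValNat.self one_lt_two, sum_range_zero]
    omega

theorem nuA_eq_sum_range (l : ℕ) (x : ℤ) :
    nuA l x = l + ∑ i ∈ range (2 * l), padicValInt 2 (x - l + 1 + i) := by
  rw [nuA, Int.Icc_eq_finset_map, sum_map, show ((l : ℤ) + 1 - (-l + 1)).toNat = 2 * l by omega]
  refine congrArg _ (sum_congr rfl fun i _ => ?_)
  simp only [Function.Embedding.trans_apply, Nat.castEmbedding_apply, addLeftEmbedding_apply]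
  ring_nf

theorem nuC_eq_sum_range {l n : ℕ} (hn : n ≠ 0) :
    nuC l n = 2 * l + ∑ i ∈ range l, padicValNat 2 (n + i) := by
  obtain ⟨n, rfl⟩ : ∃ n', n = n' + 1 := ⟨n - 1, by omega⟩
  have hsum : ∑ i ∈ range (2 * l), padicValInt 2 (l + 2 * (((n + 1 : ℕ) : ℤ) - 1) - l + 1 + i)
      = ∑ i ∈ range (2 * l), padicValNat 2 (2 * n + 1 + i) := by
    refine sum_congr rfl fun i _ => ?_
    rw [← padicValInt.of_nat]
    push_cast
    ring_nf
  rw [nuC, nuA_eq_sum_range, hsum, sum_range_two_mul_padicValNat_two]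
  ring

theorem nuC_terminal_second_general (l k : ℕ) (hhi : l < 2 ^ (k + 1))
    (a : ℕ) (ha1 : 2 ^ (k + 1) - l < a) (ha2 : a ≤ 2 ^ (k + 1)) (m : ℕ) (hm : 1 ≤ m) :
    (nuC l (2 ^ (k + 1) * (m - 1) + a) : ℤ) =
      (padicValNat 2 m : ℤ) + l + k + 2 +
        (padicValNat 2 ((-(l : ℤ) + 2 * (1 + 2 ^ (k + 1) - (a : ℤ)) + l - 1).toNat.factorial) : ℤ) +
        (padicValNat 2 (((l : ℤ) - (-(l : ℤ) + 2 * (1 + 2 ^ (k + 1) - (a : ℤ)))).toNat.factorial) : ℤ) := by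
  obtain ⟨m, rfl⟩ : ∃ m', m = m' + 1 := ⟨m - 1, by omega⟩
  obtain ⟨b, hb⟩ : ∃ b, b + a = 2 ^ (k + 1) := ⟨2 ^ (k + 1) - a, by omega⟩
  obtain ⟨c, rfl⟩ : ∃ c, l = b + 1 + c := ⟨l - 1 - b, by omega⟩
  have hcast : (2 : ℤ) ^ (k + 1) = ((2 ^ (k + 1) : ℕ) : ℤ) := by norm_cast
  have hj₁ : (-((b + 1 + c : ℕ) : ℤ) + 2 * (1 + 2 ^ (k + 1) - (a : ℤ)) + (b + 1 + c : ℕ) - 1).toNat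
      = 2 * b + 1 := by rw [hcast]; omega
  have hj₂ :
      (((b + 1 + c : ℕ) : ℤ) - (-((b + 1 + c : ℕ) : ℤ) + 2 * (1 + 2 ^ (k + 1) - (a : ℤ)))).toNat
        = 2 * c := by rw [hcast]; omega
  have harg : 2 ^ (k + 1) * (m + 1 - 1) + a = 2 ^ (k + 1) * (m + 1) - b := by
    rw [Nat.add_sub_cancel, mul_add_one]
    omega
  have hblock := sum_range_padicValNat_around_pow_dvd (dvd_mul_right (2 ^ (k + 1)) (m + 1))
    (b := b) (c := c) (by omega) (by omega) (by rw [mul_add_one]; omega)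
  rw [harg, nuC_eq_sum_range (by rw [← harg]; omega), hblock, hj₁, hj₂,
    padicValNat.mul (by positivity) m.succ_ne_zero, padicValNat.prime_pow,
    padicValNat_factorial_mul_add _ one_lt_two, padicValNat_factorial_mul, padicValNat_factorial_mul]
  push_cast
  ring

theorem nuC_terminal_second (l k : ℕ) (hl : Odd l) (hlo : 2 ^ k < l) (hhi : l < 2 ^ (k + 1))
    (a : ℕ) (ha1 : 2 ^ (k + 1) - l < a) (ha2 : a ≤ 2 ^ (k + 1)) (m : ℕ) (hm : 1 ≤ m) :
    (nuC l (2 ^ (k + 1) * (m - 1) + a) : ℤ) =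
      (padicValNat 2 m : ℤ) + l + k + 2 +
        (padicValNat 2 ((-(l : ℤ) + 2 * (1 + 2 ^ (k + 1) - (a : ℤ)) + l - 1).toNat.factorial) : ℤ) +
        (padicValNat 2 (((l : ℤ) - (-(l : ℤ) + 2 * (1 + 2 ^ (k + 1) - (a : ℤ)))).toNat.factorial) : ℤ) :=
  nuC_terminal_second_general l k hhi a ha1 ha2 m hm
end

section
/- There do not exist an integer a ≥ 1, an integer b, and a constant c such that ν₂(m) + ν₂(m+1) + ... + ν₂(m+a) = ν₂(m+b) + c holds for all m ≥ 1. -/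
/-!
Take `m` with `m + j = 2 ^ k` for some `j ∈ {0, 1}` and `k > c`, the parity of `j` chosen so that
`m + b` is odd. Then the left side is at least `ν₂(2 ^ k) = k`, while the right side is `c`.
-/

open Finset

lemma padicValInt_prime_pow (p : ℕ) [Fact p.Prime] (k : ℕ) : padicValInt p ((p : ℤ) ^ k) = k := by
  rw [← Nat.cast_pow, padicValInt.of_nat, padicValNat.prime_pow]

lemma padicValInt_two_eq_zero_of_odd {z : ℤ} (hz : Odd z) : padicValInt 2 z = 0 :=
  padicValInt.eq_zero_of_not_dvd (by simpa [← even_iff_two_dvd] using hz)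

lemma padicValInt_le_sum_range (p : ℕ) (m : ℤ) {j a : ℕ} (hj : j ≤ a) :
    (padicValInt p (m + j) : ℤ) ≤ ∑ i ∈ range (a + 1), (padicValInt p (m + i) : ℤ) :=
  single_le_sum (f := fun i : ℕ => (padicValInt p (m + i) : ℤ)) (fun _ _ => by positivity)
    (mem_range.2 (Nat.lt_succ_of_le hj))

lemma Int.exists_le_one_odd_sub (b : ℤ) : ∃ j : ℕ, j ≤ 1 ∧ Odd (b - j) := by
  rcases b.even_or_odd with hb | hb
  · exact ⟨1, le_rfl, by simpa using hb.sub_odd odd_one⟩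
  · exact ⟨0, zero_le_one, by simpa using hb⟩

theorem no_nontrivial_shift :
    ¬ ∃ (a : ℕ) (b c : ℤ), 1 ≤ a ∧
      ∀ m : ℤ, 1 ≤ m →
        (∑ i ∈ Finset.range (a + 1), (padicValInt 2 (m + i) : ℤ)) = padicValInt 2 (m + b) + c := by
  rintro ⟨a, b, c, ha, h⟩
  obtain ⟨j, hj, hodd⟩ := b.exists_le_one_odd_sub
  obtain ⟨k, hck, hk⟩ : ∃ k : ℕ, c < k ∧ k ≠ 0 := ⟨c.toNat + 1, by omega, by omega⟩
  have hpow : (2 : ℤ) ≤ 2 ^ k := le_self_pow₀ one_le_two hk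
  have hrhs : padicValInt 2 (2 ^ k - j + b) = 0 := by
    refine padicValInt_two_eq_zero_of_odd ?_
    rw [sub_add_eq_add_sub, add_sub_assoc]
    exact (even_two.pow_of_ne_zero hk).add_odd hodd
  have hlhs := padicValInt_le_sum_range 2 (2 ^ k - j) (hj.trans ha)
  rw [sub_add_cancel, show padicValInt 2 (2 ^ k) = k by simpa using padicValInt_prime_pow 2 k]
    at hlhs
  have := h (2 ^ k - j) (by omega)
  omega
end

section
/- For all m ≥ 1: ν₂(C_{5,m}) = 14 + ν₂((m+2)/4) if m ≡ 2 (mod 4); 13 + ν₂((m+1)/4) if m ≡ 3 (mod 4); 13 + ν₂((m+3)/4) if m ≡ 1 (mod 4); 16 + ν₂(m/8) if m ≡ 0 (mod 8); and 16 + ν₂((m+4)/8) if m ≡ 4 (mod 8). -/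
/-! Among `2m-1, …, 2m+8` the odd terms have valuation `0` and the even term `2(m+j)` has
valuation `1 + ν₂(m+j)`, so `ν₂(C_{5,m}) = 10 + ν₂(m(m+1)(m+2)(m+3)(m+4))`. In each residue
class of `m` the five-term product splits as `2^k · a · (odd)`, where `a` is the quotient
appearing in the formula. -/

open Finset

/-- `ν₂(C_{5,m}) = 5 + Σ_{j=-4}^{5} ν₂(2m+3+j)`, i.e. `C_{5,m} = A_{5,2m+3}`;
the terms run over `2m-1, 2m, ..., 2m+8`. -/
def nuC5 (m : ℕ) : ℕ :=
  5 + ∑ i ∈ Finset.range 10, padicValNat 2 (2 * m - 1 + i)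

theorem padicValNat_prod {ι : Type*} {p : ℕ} [Fact p.Prime] {s : Finset ι} {f : ι → ℕ}
    (hf : ∀ i ∈ s, f i ≠ 0) :
    padicValNat p (∏ i ∈ s, f i) = ∑ i ∈ s, padicValNat p (f i) := by
  classical
  induction s using Finset.induction_on with
  | empty => simp
  | insert j s hj ih =>
    rw [prod_insert hj, sum_insert hj, padicValNat.mul (hf j (mem_insert_self j s))
      (prod_ne_zero_iff.mpr fun i hi => hf i (mem_insert_of_mem hi)),
      ih fun i hi => hf i (mem_insert_of_mem hi)]

theorem padicValNat_prime_pow_mul_mul {p : ℕ} [hp : Fact p.Prime] (k : ℕ) {a b : ℕ}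
    (ha : a ≠ 0) (hb : ¬p ∣ b) : padicValNat p (p ^ k * a * b) = k + padicValNat p a := by
  have hb0 : b ≠ 0 := by rintro rfl; exact hb (dvd_zero p)
  rw [padicValNat.mul (mul_ne_zero (pow_ne_zero k hp.out.ne_zero) ha) hb0,
    padicValNat.mul (pow_ne_zero k hp.out.ne_zero) ha, padicValNat.prime_pow,
    padicValNat.eq_zero_of_not_dvd hb, add_zero]

theorem sum_range_padicValNat_two_odd_add (n k : ℕ) :
    ∑ i ∈ range (2 * k), padicValNat 2 (2 * n + 1 + i) =
      k + ∑ i ∈ range k, padicValNat 2 (n + 1 + i) := by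
  induction k with
  | zero => simp
  | succ k ih =>
    have hodd : padicValNat 2 (2 * n + 1 + 2 * k) = 0 :=
      padicValNat.eq_zero_of_not_dvd (by omega)
    have heven : padicValNat 2 (2 * n + 1 + (2 * k + 1)) = 1 + padicValNat 2 (n + 1 + k) := by
      rw [show 2 * n + 1 + (2 * k + 1) = 2 ^ 1 * (n + 1 + k) * 1 by ring,
        padicValNat_prime_pow_mul_mul 1 (by omega) (by omega)]
    rw [show 2 * (k + 1) = 2 * k + 1 + 1 by ring, sum_range_succ, sum_range_succ, ih, hodd,
      heven, sum_range_succ]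
    ring

theorem nuC5_eq_padicValNat_prod {m : ℕ} (hm : 1 ≤ m) :
    nuC5 m = 10 + padicValNat 2 (∏ i ∈ range 5, (m + i)) := by
  obtain ⟨n, rfl⟩ : ∃ n, m = n + 1 := ⟨m - 1, by omega⟩
  rw [nuC5, show 2 * (n + 1) - 1 = 2 * n + 1 by omega, sum_range_padicValNat_two_odd_add n 5,
    padicValNat_prod fun i _ => by omega]
  ring

theorem nuC5_eq_of_prod_eq {m a b : ℕ} (k : ℕ) (hm : 1 ≤ m) (ha : a ≠ 0) (hb : ¬2 ∣ b)
    (h : ∏ i ∈ range 5, (m + i) = 2 ^ k * a * b) : nuC5 m = 10 + k + padicValNat 2 a := by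
  rw [nuC5_eq_padicValNat_prod hm, h, padicValNat_prime_pow_mul_mul k ha hb, add_assoc]

theorem nuC5_formula (m : ℕ) (hm : 1 ≤ m) :
    (m % 4 = 2 → nuC5 m = 14 + padicValNat 2 ((m + 2) / 4)) ∧
    (m % 4 = 3 → nuC5 m = 13 + padicValNat 2 ((m + 1) / 4)) ∧
    (m % 4 = 1 → nuC5 m = 13 + padicValNat 2 ((m + 3) / 4)) ∧
    (m % 8 = 0 → nuC5 m = 16 + padicValNat 2 (m / 8)) ∧
    (m % 8 = 4 → nuC5 m = 16 + padicValNat 2 ((m + 4) / 8)) := by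
  refine ⟨fun h => ?_, fun h => ?_, fun h => ?_, fun h => ?_, fun h => ?_⟩
  · obtain ⟨q, rfl⟩ : ∃ q, m = 4 * q + 2 := ⟨m / 4, by omega⟩
    rw [show (4 * q + 2 + 2) / 4 = q + 1 by omega]
    exact nuC5_eq_of_prod_eq 4 (b := (2 * q + 1) * (4 * q + 3) * (4 * q + 5) * (2 * q + 3)) hm
      q.succ_ne_zero (by simp only [Nat.prime_two.dvd_mul]; omega)
      (by simp only [prod_range_succ]; ring)
  · obtain ⟨q, rfl⟩ : ∃ q, m = 4 * q + 3 := ⟨m / 4, by omega⟩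
    rw [show (4 * q + 3 + 1) / 4 = q + 1 by omega]
    exact nuC5_eq_of_prod_eq 3 (b := (4 * q + 3) * (4 * q + 5) * (2 * q + 3) * (4 * q + 7)) hm
      q.succ_ne_zero (by simp only [Nat.prime_two.dvd_mul]; omega)
      (by simp only [prod_range_succ]; ring)
  · obtain ⟨q, rfl⟩ : ∃ q, m = 4 * q + 1 := ⟨m / 4, by omega⟩
    rw [show (4 * q + 1 + 3) / 4 = q + 1 by omega]
    exact nuC5_eq_of_prod_eq 3 (b := (4 * q + 1) * (2 * q + 1) * (4 * q + 3) * (4 * q + 5)) hm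
      q.succ_ne_zero (by simp only [Nat.prime_two.dvd_mul]; omega)
      (by simp only [prod_range_succ]; ring)
  · obtain ⟨q, rfl⟩ : ∃ q, m = 8 * q := ⟨m / 8, by omega⟩
    rw [show 8 * q / 8 = q by omega]
    exact nuC5_eq_of_prod_eq 6 (b := (8 * q + 1) * (4 * q + 1) * (8 * q + 3) * (2 * q + 1)) hm
      (by omega) (by simp only [Nat.prime_two.dvd_mul]; omega)
      (by simp only [prod_range_succ]; ring)
  · obtain ⟨q, rfl⟩ : ∃ q, m = 8 * q + 4 := ⟨m / 8, by omega⟩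
    rw [show (8 * q + 4 + 4) / 8 = q + 1 by omega]
    exact nuC5_eq_of_prod_eq 6 (b := (2 * q + 1) * (8 * q + 5) * (4 * q + 3) * (8 * q + 7)) hm
      q.succ_ne_zero (by simp only [Nat.prime_two.dvd_mul]; omega)
      (by simp only [prod_range_succ]; ring)
end
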